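/- Let f be a complex polynomial of degree n ≥ 4 with no simple roots, with n₂ distinct roots of multiplicity exactly 2 and N₃ distinct roots of multiplicity at least 3. Then the ℂ-vector space W(f) = { p : deg p ≤ n-2, f ∣ f''p - f'p' } has dimension n - 1 - (n₂ + 2N₃). -/

import Mathlib

/-!
The polynomial `f'' p - f' p'` is the Wronskian `W(p, f')`. At a root `β` of `f` of multiplicity
`m ≥ 2`, write `p = (X - β)^j q` and `f' = (X - β)^(m-1) u` with `q(β), u(β) ≠ 0`; then
`W(p, f') = (X - β)^(j+m-2) ((m-1-j) q u + (X - β) W(q, u))`, so `(X - β)^m` divides it exactly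
when `j ≥ 2` or `j = m - 1 = 1`, i.e. when `j ≥ min 2 (m - 1)`. Hence `W(f)` is the space of
multiples of `g = ∏ (X - β)^(min 2 (m_β - 1))` of degree at most `n - 2`, of dimension
`n - 1 - deg g`, and `deg g = n₂ + 2 N₃`.
-/

open Polynomial

/-- The space `W(f)` of polynomials `p` of degree at most `deg f - 2` such that
`f` divides `f'' p - f' p'`. -/
noncomputable def Wspace (f : Polynomial ℂ) : Submodule ℂ (Polynomial ℂ) where
  carrier := {p | p.degree ≤ (f.natDegree - 2 : ℕ) ∧
    f ∣ (derivative (derivative f) * p - derivative f * derivative p)}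
  add_mem' := by
    rintro a b ⟨ha1, ha2⟩ ⟨hb1, hb2⟩
    refine ⟨le_trans (degree_add_le a b) (max_le ha1 hb1), ?_⟩
    have := dvd_add ha2 hb2
    simpa [mul_add, add_sub_add_comm] using this
  zero_mem' := by simp
  smul_mem' := by
    rintro c a ⟨ha1, ha2⟩
    refine ⟨le_trans (degree_smul_le c a) ha1, ?_⟩
    have := Dvd.dvd.mul_left ha2 (C c)
    simpa [smul_eq_C_mul, mul_sub, mul_left_comm, mul_comm, mul_assoc] using this

open Finset in
theorem Finset.sum_min_two_sub_one {α : Type*} (s : Finset α) (m : α → ℕ)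
    (hm : ∀ a ∈ s, 2 ≤ m a) :
    ∑ a ∈ s, min 2 (m a - 1) = #{a ∈ s | m a = 2} + 2 * #{a ∈ s | 3 ≤ m a} := by
  classical
  rw [card_filter, card_filter, mul_sum, ← sum_add_distrib]
  refine sum_congr rfl fun a ha => ?_
  have := hm a ha
  split_ifs <;> omega

namespace Polynomial

theorem wronskian_X_sub_C_pow_mul {R : Type*} [CommRing R] (r : R) (a b : ℕ) (u v : R[X]) :
    wronskian ((X - C r) ^ a * u) ((X - C r) ^ (b + 1) * v) =
      (X - C r) ^ (a + b) * (C ((b : R) + 1 - a) * u * v + (X - C r) * wronskian u v) := by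
  cases a <;> simp only [wronskian, derivative_mul, derivative_pow, derivative_X_sub_C,
    C_sub, C_add, C_1, map_natCast] <;> push_cast <;> ring

section Field

variable {K : Type*} [Field K]

theorem X_sub_C_pow_dvd_wronskian_derivative_iff [CharZero K] {f : K[X]} {r : K}
    (hm : 2 ≤ f.rootMultiplicity r) (p : K[X]) :
    (X - C r) ^ f.rootMultiplicity r ∣ wronskian p (derivative f) ↔
      (X - C r) ^ min 2 (f.rootMultiplicity r - 1) ∣ p := by
  obtain ⟨b, hb⟩ : ∃ b, f.rootMultiplicity r = b + 2 := ⟨_, (Nat.sub_add_cancel hm).symm⟩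
  have hroot : f.IsRoot r := (rootMultiplicity_pos'.1 (by omega)).2
  have hf'r : (derivative f).rootMultiplicity r = b + 1 := by
    rw [derivative_rootMultiplicity_of_root hroot, hb]; rfl
  have hf' : derivative f ≠ 0 := (rootMultiplicity_pos'.1 (by rw [hf'r]; omega)).1
  obtain ⟨u, hu, hur⟩ := exists_eq_pow_rootMultiplicity_mul_and_not_dvd _ hf' r
  rw [hb, show b + 2 - 1 = b + 1 by omega, hu, hf'r]
  constructor
  · intro hdvd
    by_cases hp : p = 0
    · simp [hp]
    obtain ⟨q, hq, hqr⟩ := exists_eq_pow_rootMultiplicity_mul_and_not_dvd _ hp r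
    set j := p.rootMultiplicity r
    by_contra hpj
    have hj : j < min 2 (b + 1) := by
      by_contra! h
      exact hpj (hq ▸ (pow_dvd_pow _ h).mul_right q)
    rw [hq, wronskian_X_sub_C_pow_mul] at hdvd
    have hR : ¬ X - C r ∣ C ((b : K) + 1 - j) * q * u + (X - C r) * wronskian q u := by
      have hj' : (b : K) + 1 - j ≠ 0 := sub_ne_zero.2 (by exact_mod_cast (by omega : b + 1 ≠ j))
      rw [dvd_iff_isRoot] at hqr hur ⊢
      simpa [IsRoot, hj'] using ⟨hqr, hur⟩
    have := (pow_dvd_pow_iff (X_sub_C_ne_zero r) (not_isUnit_X_sub_C r)).1 <|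
      (prime_X_sub_C r).pow_dvd_of_dvd_mul_right _ hR hdvd
    omega
  · rintro ⟨q, rfl⟩
    rw [wronskian_X_sub_C_pow_mul]
    rcases min_choice 2 (b + 1) with h | h <;> rw [h]
    · exact dvd_mul_of_dvd_left (pow_dvd_pow _ (by omega)) _
    · rw [Nat.cast_add_one, sub_self, C_0, zero_mul, zero_mul, zero_add, ← mul_assoc, ← pow_succ]
      exact dvd_mul_of_dvd_left (pow_dvd_pow _ (by omega)) _

theorem dvd_iff_forall_X_sub_C_pow_rootMultiplicity_dvd [IsAlgClosed K] {f g : K[X]}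
    (hf : f ≠ 0) : f ∣ g ↔ ∀ a, (X - C a) ^ f.rootMultiplicity a ∣ g := by
  refine ⟨fun h a => (pow_rootMultiplicity_dvd f a).trans h, fun h => ?_⟩
  rcases eq_or_ne g 0 with rfl | hg
  · exact dvd_zero f
  classical
  rw [IsAlgClosed.dvd_iff_roots_le_roots hf hg, Multiset.le_iff_count]
  intro a
  rw [count_roots, count_roots, le_rootMultiplicity_iff hg]
  exact h a

theorem prod_X_sub_C_pow_dvd_iff (s : Finset K) (e : K → ℕ) (p : K[X]) :
    ∏ a ∈ s, (X - C a) ^ e a ∣ p ↔ ∀ a ∈ s, (X - C a) ^ e a ∣ p :=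
  ⟨fun h _ ha => (Finset.dvd_prod_of_mem (fun a => (X - C a) ^ e a) ha).trans h,
    Finset.prod_dvd_of_coprime
      fun _ _ _ _ hab => ((pairwise_coprime_X_sub_C Function.injective_id) hab).pow⟩

theorem mem_map_mulLeft_degreeLT_iff {g : K[X]} (hg : g ≠ 0) (N : ℕ) (p : K[X]) :
    p ∈ (degreeLT K (N + 1 - g.natDegree)).map (LinearMap.mulLeft K g) ↔
      p.degree ≤ N ∧ g ∣ p := by
  simp only [Submodule.mem_map, mem_degreeLT, LinearMap.mulLeft_apply]
  constructor
  · rintro ⟨q, hq, rfl⟩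
    refine ⟨?_, dvd_mul_right g q⟩
    rcases eq_or_ne q 0 with rfl | hq0
    · simp
    rw [← natDegree_lt_iff_degree_lt hq0] at hq
    rw [← natDegree_le_iff_degree_le, natDegree_mul hg hq0]
    omega
  · rintro ⟨hp, q, rfl⟩
    refine ⟨q, ?_, rfl⟩
    rcases eq_or_ne q 0 with rfl | hq0
    · simp
    rw [← natDegree_le_iff_degree_le, natDegree_mul hg hq0] at hp
    rw [← natDegree_lt_iff_degree_lt hq0]
    omega

theorem finrank_map_mulLeft_degreeLT {g : K[X]} (hg : g ≠ 0) (k : ℕ) :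
    Module.finrank K ((degreeLT K k).map (LinearMap.mulLeft K g)) = k := by
  rw [← (Submodule.equivMapOfInjective _ (mul_right_injective₀ hg) _).finrank_eq,
    Module.finrank_eq_card_basis (degreeLT.basis K k), Fintype.card_fin]

variable [DecidableEq K]

noncomputable def wronskianDivisor (f : K[X]) : K[X] :=
  ∏ a ∈ f.roots.toFinset, (X - C a) ^ min 2 (f.rootMultiplicity a - 1)

theorem monic_wronskianDivisor (f : K[X]) : (wronskianDivisor f).Monic :=
  monic_prod_of_monic _ _ fun a _ => (monic_X_sub_C a).pow _

theorem natDegree_wronskianDivisor (f : K[X]) :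
    (wronskianDivisor f).natDegree =
      ∑ a ∈ f.roots.toFinset, min 2 (f.rootMultiplicity a - 1) := by
  rw [wronskianDivisor, natDegree_prod _ _ fun a _ => pow_ne_zero _ (X_sub_C_ne_zero a)]
  simp only [natDegree_pow, natDegree_X_sub_C, mul_one]

theorem dvd_wronskian_derivative_iff [IsAlgClosed K] [CharZero K] {f : K[X]} (hf : f ≠ 0)
    (hmult : ∀ a, f.IsRoot a → 2 ≤ f.rootMultiplicity a) (p : K[X]) :
    f ∣ wronskian p (derivative f) ↔ wronskianDivisor f ∣ p := by
  rw [dvd_iff_forall_X_sub_C_pow_rootMultiplicity_dvd hf, wronskianDivisor,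
    prod_X_sub_C_pow_dvd_iff]
  refine forall_congr' fun a => ?_
  by_cases ha : f.IsRoot a
  · have hmem : a ∈ f.roots.toFinset := Multiset.mem_toFinset.2 ((mem_roots hf).2 ha)
    simp only [hmem, forall_const, X_sub_C_pow_dvd_wronskian_derivative_iff (hmult a ha)]
  · simp [rootMultiplicity_eq_zero ha]

end Field

end Polynomial

theorem mem_Wspace_iff (f p : ℂ[X]) :
    p ∈ Wspace f ↔ p.degree ≤ (f.natDegree - 2 : ℕ) ∧ f ∣ wronskian p (derivative f) := by
  rw [wronskian, mul_comm p, mul_comm (derivative p)]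
  rfl

theorem stmt4 (f : Polynomial ℂ) (hn : 4 ≤ f.natDegree)
    (hmult : ∀ β : ℂ, f.IsRoot β → 2 ≤ f.rootMultiplicity β)
    (n₂ N₃ : ℕ)
    (hn₂ : n₂ = (f.roots.toFinset.filter (fun β => f.rootMultiplicity β = 2)).card)
    (hN₃ : N₃ = (f.roots.toFinset.filter (fun β => 3 ≤ f.rootMultiplicity β)).card) :
    Module.finrank ℂ (Wspace f) = f.natDegree - 1 - (n₂ + 2 * N₃) := by
  have hf : f ≠ 0 := by rintro rfl; simp at hn
  have hg : wronskianDivisor f ≠ 0 := (monic_wronskianDivisor f).ne_zero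
  have hW : Wspace f = (degreeLT ℂ (f.natDegree - 2 + 1 - (wronskianDivisor f).natDegree)).map
      (LinearMap.mulLeft ℂ (wronskianDivisor f)) := by
    ext p
    rw [mem_map_mulLeft_degreeLT_iff hg, mem_Wspace_iff, dvd_wronskian_derivative_iff hf hmult]
  have hroots : ∀ β ∈ f.roots.toFinset, 2 ≤ f.rootMultiplicity β := fun β hβ =>
    hmult β (isRoot_of_mem_roots (Multiset.mem_toFinset.1 hβ))
  rw [hW, finrank_map_mulLeft_degreeLT hg, natDegree_wronskianDivisor,
    Finset.sum_min_two_sub_one _ _ hroots, ← hn₂, ← hN₃]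
  omega
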